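/- arXiv:math/9909173 — 2 statements merged into one kernel-verified Lean document; each statement's English description precedes it below -/
import Mathlib

section
/- Let A be a Banach algebra. If (I_α) is a decreasing net in Id(A) and I = ⋂_α I_α, then I_α → I in the topology τ_r. Likewise, if (I_α) is an increasing net in Id(A) and I is the closure of ⋃_α I_α, then I_α → I in τ_r. -/
open Topology Filter MeasureTheory Set

noncomputable section

universe u v




section IdealSpace

variable (A : Type u) [NonUnitalNormedRing A] [NormedSpace ℂ A]

/-- The space `Id(A)` of closed two-sided ideals of the Banach algebra `A`. -/
def IdSpace : Type u :=
  {S : Submodule ℂ A // IsClosed (S : Set A) ∧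
    (∀ a b : A, b ∈ S → a * b ∈ S) ∧ (∀ a b : A, a ∈ S → a * b ∈ S)}

instance : PartialOrder (IdSpace A) :=
  Subtype.partialOrder _

variable {A}

/-- The quotient norm `‖a + I‖` of `a` modulo the closed ideal `I`. -/
def qnorm (I : IdSpace A) (a : A) : ℝ := Metric.infDist a (I.1 : Set A)

variable (A)

/-- `τ_u`: the weakest topology on `Id(A)` for which all the norm functions
`I ↦ ‖a + I‖` are upper semicontinuous. -/
def tauU : TopologicalSpace (IdSpace A) :=
  TopologicalSpace.generateFrom {U | ∃ (a : A) (r : ℝ), U = {I : IdSpace A | qnorm I a < r}}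

variable {A}

/-- A net (given by a filter `F`) in `Id(A)` has the *normality property* with respect to
`I ∈ Id(A)` if `a ∉ I` implies `liminf ‖a + I_α‖ > 0`. -/
def NormalityProp (F : Filter (IdSpace A)) (I : IdSpace A) : Prop :=
  ∀ a : A, a ∉ I.1 →
    0 < Filter.liminf (fun J : IdSpace A => ENNReal.ofReal (qnorm J a)) F

variable (A)

/-- `τ_n`: the topology whose closed sets `N` have the property that if a net in `N` has the
normality property with respect to `I`, then `I ∈ N`. -/
def tauN : TopologicalSpace (IdSpace A) :=
  TopologicalSpace.generateFrom
    {U | ∀ (F : Filter (IdSpace A)), F.NeBot → F ≤ Filter.principal Uᶜ →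
      ∀ I : IdSpace A, NormalityProp F I → I ∈ Uᶜ}

/-- `τ_r`: the topology generated by `τ_u` and `τ_n`. -/
def tauR : TopologicalSpace (IdSpace A) := tauU A ⊓ tauN A

end IdealSpace




section Seminorms

variable (A : Type u) [NonUnitalNormedRing A] [NormedSpace ℂ A]

/-- An algebra seminorm on `A`: a (vector-space) seminorm which is submultiplicative. -/
structure AlgebraSeminorm extends Seminorm ℂ A where
  mul_le' : ∀ a b : A, toFun (a * b) ≤ toFun a * toFun b

variable {A}

/-- `S_k(A)`: the seminorms `ρ` on `A` with `ρ(a) ≤ k‖a‖` for all `a`. -/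
def Sk (k : ℕ) : Type u :=
  {ρ : AlgebraSeminorm A // ∀ a : A, ρ.toSeminorm a ≤ k * ‖a‖}

instance (k : ℕ) : TopologicalSpace (Sk (A := A) k) :=
  TopologicalSpace.induced (fun ρ (a : A) => ρ.1.toSeminorm a) inferInstance

/-- The kernel of a bounded algebra seminorm, as a closed two-sided ideal. -/
def kerOf {k : ℕ} (ρ : Sk (A := A) k) : IdSpace A := by
  refine ⟨{ carrier := {a : A | ρ.1.toSeminorm a = 0}
            zero_mem' := map_zero ρ.1.toSeminorm
            add_mem' := ?_
            smul_mem' := ?_ }, ?_, ?_, ?_⟩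
  · intro a b ha hb
    have ha' : ρ.1.toSeminorm a = 0 := ha
    have hb' : ρ.1.toSeminorm b = 0 := hb
    show ρ.1.toSeminorm (a + b) = 0
    refine le_antisymm ?_ (apply_nonneg _ _)
    calc ρ.1.toSeminorm (a + b) ≤ ρ.1.toSeminorm a + ρ.1.toSeminorm b := map_add_le_add _ _ _
    _ = 0 := by rw [ha', hb', add_zero]
  · intro c a ha
    have ha' : ρ.1.toSeminorm a = 0 := ha
    show ρ.1.toSeminorm (c • a) = 0
    rw [map_smul_eq_mul, ha', mul_zero]
  · have hcont : Continuous fun a : A => ρ.1.toSeminorm a := by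
      rw [Metric.continuous_iff]
      intro b ε hε
      refine ⟨ε / (k + 1), by positivity, fun a hab => ?_⟩
      have h1 : ρ.1.toSeminorm a ≤ ρ.1.toSeminorm (a - b) + ρ.1.toSeminorm b := by
        simpa using map_add_le_add ρ.1.toSeminorm (a - b) b
      have h2 : ρ.1.toSeminorm b ≤ ρ.1.toSeminorm (a - b) + ρ.1.toSeminorm a := by
        have : ρ.1.toSeminorm (b - a) = ρ.1.toSeminorm (a - b) := by
          rw [← neg_sub a b, map_neg_eq_map]
        simpa [this] using map_add_le_add ρ.1.toSeminorm (b - a) a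
      have hbd : ρ.1.toSeminorm (a - b) ≤ k * ‖a - b‖ := ρ.2 _
      have hab' : ‖a - b‖ < ε / (k + 1) := by
        rwa [dist_eq_norm] at hab
      have : ρ.1.toSeminorm (a - b) < ε := by
        calc ρ.1.toSeminorm (a - b) ≤ k * ‖a - b‖ := hbd
        _ ≤ (k + 1) * ‖a - b‖ := by
              have := norm_nonneg (a - b); nlinarith
        _ < (k + 1) * (ε / (k + 1)) := by
              have hk : (0 : ℝ) < k + 1 := by positivity
              exact mul_lt_mul_of_pos_left hab' hk
        _ = ε := by field_simp
      rw [Real.dist_eq]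
      rw [abs_sub_lt_iff]
      constructor <;> linarith
    exact IsClosed.preimage hcont isClosed_singleton
  · intro a b hb
    have hb' : ρ.1.toSeminorm b = 0 := hb
    show ρ.1.toSeminorm (a * b) = 0
    refine le_antisymm ?_ (apply_nonneg _ _)
    calc ρ.1.toSeminorm (a * b) ≤ ρ.1.toSeminorm a * ρ.1.toSeminorm b := ρ.1.mul_le' a b
    _ = 0 := by rw [hb', mul_zero]
  · intro a b ha
    have ha' : ρ.1.toSeminorm a = 0 := ha
    show ρ.1.toSeminorm (a * b) = 0
    refine le_antisymm ?_ (apply_nonneg _ _)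
    calc ρ.1.toSeminorm (a * b) ≤ ρ.1.toSeminorm a * ρ.1.toSeminorm b := ρ.1.mul_le' a b
    _ = 0 := by rw [ha', zero_mul]

variable (A)

/-- `τ_k`: the quotient topology on `Id(A)` induced by the kernel map `κ_k : S_k → Id(A)`. -/
def tauK (k : ℕ) : TopologicalSpace (IdSpace A) :=
  TopologicalSpace.coinduced (kerOf (A := A) (k := k)) inferInstance

/-- `τ_∞`: the intersection of the topologies `τ_k`. -/
def tauInfty : TopologicalSpace (IdSpace A) := ⨆ k : ℕ, tauK A k

end Seminorms
section Synthesis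

variable {A : Type u} [NonUnitalNormedRing A] [NormedSpace ℂ A]

/-- `P` is a primitive ideal: the kernel of an algebraically irreducible representation of `A`
(on a complex vector space). -/
def IsPrimitiveIdl (P : IdSpace A) : Prop :=
  ∃ (M : Type u) (_ : AddCommGroup M) (_ : Module ℂ M)
    (π : A →ₙ+* Module.End ℂ M),
      (∀ (c : ℂ) (a : A), π (c • a) = c • π a) ∧
      (∃ (a : A) (m : M), π a m ≠ 0) ∧
      (∀ S : Submodule ℂ M, (∀ a : A, ∀ m ∈ S, π a m ∈ S) → S = ⊥ ∨ S = ⊤) ∧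
      (∀ a : A, a ∈ P.1 ↔ π a = 0)

/-- `P` is a proper closed prime ideal of `A`. -/
def IsPrimeIdl (P : IdSpace A) : Prop :=
  (P.1 : Set A) ≠ Set.univ ∧
    ∀ I J : IdSpace A, (∀ a ∈ I.1, ∀ b ∈ J.1, a * b ∈ P.1) → (I.1 ≤ P.1 ∨ J.1 ≤ P.1)

/-- A closed ideal is semisimple if it is an intersection of primitive ideals. -/
def IsSemisimpleIdl (I : IdSpace A) : Prop :=
  ∃ T : Set (IdSpace A), (∀ P ∈ T, IsPrimitiveIdl P) ∧
    (I.1 : Set A) = ⋂ P ∈ T, ((P : IdSpace A).1 : Set A)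

variable (A) in
/-- The set of primitive ideals of `A`. -/
def primSet : Set (IdSpace A) := {P | IsPrimitiveIdl P}

variable (A) in
/-- The set of semisimple prime ideals of `A`. -/
def primsSet : Set (IdSpace A) := {P | IsPrimeIdl P ∧ IsSemisimpleIdl P}

/-- The hull-kernel topology on a set of closed ideals of `A`: the coarsest topology in which
all hulls `{P : I ⊆ P}` are closed. -/
def hkTop (S : Set (IdSpace A)) : TopologicalSpace ↥S :=
  TopologicalSpace.generateFrom
    {U | ∃ J : Set A, U = {P : ↥S | ¬ J ⊆ ((P : IdSpace A).1 : Set A)}}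

variable (A) in
/-- The hull-kernel topology `τ_w` has the normality property on `Prim(A)`: whenever a net
`(P_α)` in `Prim(A)` converges to `P` in the hull-kernel topology and `a ∉ P`, then
`liminf ‖a + P_α‖ > 0`. -/
def TauWNormalOnPrim : Prop :=
  ∀ (F : Filter ↥(primSet A)), F.NeBot → ∀ P : ↥(primSet A),
    F ≤ @nhds _ (hkTop (primSet A)) P →
    ∀ a : A, a ∉ (P : IdSpace A).1 →
      0 < Filter.liminf
        (fun Q : ↥(primSet A) => ENNReal.ofReal (qnorm (Q : IdSpace A) a)) F

variable (A) in
/-- Spectral synthesis for a Banach algebra `A`: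
(i) `Prim^s(A)` is locally compact;
(ii) `τ_w` has the normality property on `Prim(A)`;
(iii) every proper closed ideal of `A` is semisimple. -/
def HasSynthesis : Prop :=
  @LocallyCompactSpace _ (hkTop (primsSet A)) ∧
  TauWNormalOnPrim A ∧
  ∀ I : IdSpace A, (I.1 : Set A) ≠ Set.univ → IsSemisimpleIdl I

end Synthesis

/-!
Convergence in `τ_r` is convergence in `τ_u` (eventually `‖a + I_α‖ < r` whenever `‖a + I‖ < r`)
together with convergence in `τ_n`, which holds as soon as, for every `a ∉ I`, the norms
`‖a + I_α‖` are bounded below by a positive constant on a tail. For a decreasing net, `I ⊆ I_α`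
gives the first, and `a ∉ I_α₀` for some `α₀` gives the bound `‖a + I_α₀‖ > 0` for `α ≥ α₀`.
For an increasing net, `I_α ⊆ I` gives the bound `‖a + I‖ > 0`, and `‖a + I‖` is the distance
from `a` to `⋃ I_α`, so it is approximated by some `‖a + I_α₀‖` and then by every later term.
-/

section Convergence

variable {A : Type u} [NonUnitalNormedRing A] [NormedSpace ℂ A]

lemma IdSpace.coe_nonempty (I : IdSpace A) : (I.1 : Set A).Nonempty := ⟨0, I.1.zero_mem⟩

lemma qnorm_le_qnorm_of_le {I J : IdSpace A} (h : I ≤ J) (a : A) : qnorm J a ≤ qnorm I a :=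
  Metric.infDist_le_infDist_of_subset h I.coe_nonempty

lemma qnorm_pos_of_notMem {I : IdSpace A} {a : A} (ha : a ∉ I.1) : 0 < qnorm I a :=
  (I.2.1.notMem_iff_infDist_pos I.coe_nonempty).1 ha

lemma exists_qnorm_lt_of_eq_closure_iUnion {ι : Type v} [Nonempty ι] {Iₐ : ι → IdSpace A}
    {I : IdSpace A} (hI : (I.1 : Set A) = closure (⋃ α, ((Iₐ α).1 : Set A))) {a : A} {r : ℝ}
    (h : qnorm I a < r) : ∃ α, qnorm (Iₐ α) a < r := by
  rw [qnorm, hI, Metric.infDist_closure] at h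
  obtain ⟨y, hy, hay⟩ :=
    (Metric.infDist_lt_iff (Set.nonempty_iUnion.2 ⟨Classical.arbitrary ι, (Iₐ _).coe_nonempty⟩)).1 h
  obtain ⟨α, hyα⟩ := Set.mem_iUnion.1 hy
  exact ⟨α, (Metric.infDist_le_dist_of_mem hyα).trans_lt hay⟩

lemma tendsto_tauU_iff {β : Type*} {l : Filter β} {f : β → IdSpace A} {I : IdSpace A} :
    Tendsto f l (@nhds _ (tauU A) I) ↔
      ∀ (a : A) (r : ℝ), qnorm I a < r → ∀ᶠ x in l, qnorm (f x) a < r := by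
  rw [tauU, TopologicalSpace.tendsto_nhds_generateFrom_iff]
  constructor
  · exact fun h a r hr => h _ ⟨a, r, rfl⟩ hr
  · rintro h _ ⟨a, r, rfl⟩ hr
    exact h a r hr

lemma tendsto_tauN_of_normalityProp {β : Type*} {l : Filter β} {f : β → IdSpace A}
    {I : IdSpace A} (h : ∀ F : Filter (IdSpace A), F.NeBot → F ≤ l.map f → NormalityProp F I) :
    Tendsto f l (@nhds _ (tauN A) I) := by
  rw [tauN, TopologicalSpace.tendsto_nhds_generateFrom_iff]
  intro U hU hIU
  by_contra hnot
  -- the part of the net outside `U` is a net in the `τ_n`-closed set `Uᶜ` with the normality property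
  have hF : (l.map f ⊓ 𝓟 Uᶜ).NeBot := by
    rw [inf_principal_neBot_iff]
    intro V hV
    have hout : ∃ᶠ J in l.map f, J ∉ U := frequently_map.2 (not_eventually.1 hnot)
    obtain ⟨J, hJU, hJV⟩ := (hout.and_eventually hV).exists
    exact ⟨J, hJV, hJU⟩
  exact hU _ hF inf_le_right I (h _ hF inf_le_left) hIU

lemma tendsto_tauN_of_eventually_le {β : Type*} {l : Filter β} {f : β → IdSpace A}
    {I : IdSpace A} (h : ∀ a ∉ I.1, ∃ c > 0, ∀ᶠ x in l, c ≤ qnorm (f x) a) :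
    Tendsto f l (@nhds _ (tauN A) I) := by
  refine tendsto_tauN_of_normalityProp fun F _ hFl a ha => ?_
  obtain ⟨c, hc, hcf⟩ := h a ha
  refine (ENNReal.ofReal_pos.2 hc).trans_le (le_liminf_of_le (by isBoundedDefault) ?_)
  exact hFl (hcf.mono fun _ hx => ENNReal.ofReal_le_ofReal hx)

lemma tendsto_tauR_iff {β : Type*} {l : Filter β} {f : β → IdSpace A} {I : IdSpace A} :
    Tendsto f l (@nhds _ (tauR A) I) ↔
      Tendsto f l (@nhds _ (tauU A) I) ∧ Tendsto f l (@nhds _ (tauN A) I) := by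
  rw [tauR, nhds_inf, tendsto_inf]

theorem tendsto_tauR_of_antitone {ι : Type v} [Preorder ι] {Iₐ : ι → IdSpace A} {I : IdSpace A}
    (hanti : Antitone Iₐ) (hI : (I.1 : Set A) = ⋂ α, ((Iₐ α).1 : Set A)) :
    Tendsto Iₐ atTop (@nhds _ (tauR A) I) := by
  have hle : ∀ α, I ≤ Iₐ α := fun α => hI.trans_subset (Set.iInter_subset _ α)
  refine tendsto_tauR_iff.2 ⟨tendsto_tauU_iff.2 fun a r hr => ?_, ?_⟩
  · exact Eventually.of_forall fun α => (qnorm_le_qnorm_of_le (hle α) a).trans_lt hr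
  · refine tendsto_tauN_of_eventually_le fun a ha => ?_
    obtain ⟨α₀, hα₀⟩ : ∃ α₀, a ∉ (Iₐ α₀).1 := by
      simpa [← SetLike.mem_coe, hI] using ha
    refine ⟨_, qnorm_pos_of_notMem hα₀, ?_⟩
    filter_upwards [eventually_ge_atTop α₀] with α hα
    exact qnorm_le_qnorm_of_le (hanti hα) a

theorem tendsto_tauR_of_monotone {ι : Type v} [Preorder ι] [Nonempty ι] {Iₐ : ι → IdSpace A}
    {I : IdSpace A} (hmono : Monotone Iₐ)
    (hI : (I.1 : Set A) = closure (⋃ α, ((Iₐ α).1 : Set A))) :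
    Tendsto Iₐ atTop (@nhds _ (tauR A) I) := by
  have hle : ∀ α, Iₐ α ≤ I := fun α =>
    (Set.subset_iUnion (fun β => ((Iₐ β).1 : Set A)) α).trans (subset_closure.trans hI.ge)
  refine tendsto_tauR_iff.2 ⟨tendsto_tauU_iff.2 fun a r hr => ?_, ?_⟩
  · obtain ⟨α₀, hα₀⟩ := exists_qnorm_lt_of_eq_closure_iUnion hI hr
    filter_upwards [eventually_ge_atTop α₀] with α hα
    exact (qnorm_le_qnorm_of_le (hmono hα) a).trans_lt hα₀
  · exact tendsto_tauN_of_eventually_le fun a ha =>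
      ⟨_, qnorm_pos_of_notMem ha, Eventually.of_forall fun α => qnorm_le_qnorm_of_le (hle α) a⟩

end Convergence

theorem stmt_0_general (A : Type u) [NonUnitalNormedRing A] [NormedSpace ℂ A] :
    (∀ (ι : Type v) (_ : Preorder ι) (_ : IsDirected ι (· ≤ ·)) (_ : Nonempty ι)
      (Iₐ : ι → IdSpace A) (I : IdSpace A), Antitone Iₐ →
        (I.1 : Set A) = ⋂ α, ((Iₐ α).1 : Set A) →
        Filter.Tendsto Iₐ Filter.atTop (@nhds _ (tauR A) I)) ∧
    (∀ (ι : Type v) (_ : Preorder ι) (_ : IsDirected ι (· ≤ ·)) (_ : Nonempty ι)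
      (Iₐ : ι → IdSpace A) (I : IdSpace A), Monotone Iₐ →
        (I.1 : Set A) = closure (⋃ α, ((Iₐ α).1 : Set A)) →
        Filter.Tendsto Iₐ Filter.atTop (@nhds _ (tauR A) I)) :=
  ⟨fun _ _ _ _ _ _ hanti hI => tendsto_tauR_of_antitone hanti hI,
    fun _ _ _ _ _ _ hmono hI => tendsto_tauR_of_monotone hmono hI⟩

/-- **Lemma 1.1.** Let `A` be a Banach algebra. If `(I_α)` is a decreasing net in `Id(A)` and
`I = ⋂ I_α`, then `I_α → I` in `τ_r`; likewise, if `(I_α)` is an increasing net and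
`I = closure (⋃ I_α)`, then `I_α → I` in `τ_r`. -/
theorem stmt_0 (A : Type u) [NonUnitalNormedRing A] [NormedSpace ℂ A]
    [IsScalarTower ℂ A A] [SMulCommClass ℂ A A] [CompleteSpace A] :
    (∀ (ι : Type v) (_ : Preorder ι) (_ : IsDirected ι (· ≤ ·)) (_ : Nonempty ι)
      (Iₐ : ι → IdSpace A) (I : IdSpace A), Antitone Iₐ →
        (I.1 : Set A) = ⋂ α, ((Iₐ α).1 : Set A) →
        Filter.Tendsto Iₐ Filter.atTop (@nhds _ (tauR A) I)) ∧
    (∀ (ι : Type v) (_ : Preorder ι) (_ : IsDirected ι (· ≤ ·)) (_ : Nonempty ι)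
      (Iₐ : ι → IdSpace A) (I : IdSpace A), Monotone Iₐ →
        (I.1 : Set A) = closure (⋃ α, ((Iₐ α).1 : Set A)) →
        Filter.Tendsto Iₐ Filter.atTop (@nhds _ (tauR A) I)) :=
  stmt_0_general A
end
end

section
/- Let q be a prime and let N be a second countable, uncountable, locally compact abelian group in which every non-trivial element has order q. Then for every non-empty open subset U of N there exists an increasing sequence (F_k) of finite independent subsets of U such that ⋃_k F_k is dense in U. -/
/-!
Since `q • x = 0` for all `x`, the group `N` is a vector space over `ZMod q`, and linear
independence over `ZMod q` implies independence. A nonempty open set cannot be countable (countably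
many of its translates cover the uncountable group), whereas the span of a finite set is finite.
So one can walk through a countable basis and, in each basic open set meeting `U`, pick a point of
`U` outside the span of the points chosen so far.
-/

open Topology Filter Set

noncomputable section

universe u v

section Groups

/-- A subset `E` of an (additively written) abelian group is *independent* if for all distinct
`x₁, …, x_k ∈ E` and integers `n₁, …, n_k`, either `n₁x₁ = n₂x₂ = ⋯ = n_kx_k = 0` or
`n₁x₁ + ⋯ + n_kx_k ≠ 0`. -/
def IsIndependentSet {N : Type u} [AddCommGroup N] (E : Set N) : Prop :=
  ∀ (k : ℕ) (x : Fin k → N), Function.Injective x → (∀ i, x i ∈ E) →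
    ∀ n : Fin k → ℤ, (∀ i, n i • x i = 0) ∨ (∑ i, n i • x i ≠ 0)

/-- A locally compact abelian group is an I-group if every neighbourhood of the identity
contains an element of infinite order (additive version). -/
def IsIGroup (N : Type u) [AddGroup N] [TopologicalSpace N] : Prop :=
  ∀ U ∈ nhds (0 : N), ∃ x ∈ U, ¬ IsOfFinAddOrder x

/-- A locally compact abelian group is an I-group if every neighbourhood of the identity
contains an element of infinite order (multiplicative version). -/
def IsMulIGroup (H : Type u) [Monoid H] [TopologicalSpace H] : Prop :=
  ∀ U ∈ nhds (1 : H), ∃ x ∈ U, ¬ IsOfFinOrder x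

end Groups

theorem isIndependentSet_of_linearIndepOn {q : ℕ} {N : Type u} [AddCommGroup N]
    [Module (ZMod q) N] {E : Set N} (hE : LinearIndepOn (ZMod q) id E) : IsIndependentSet E := by
  intro k x hx hxE n
  refine or_iff_not_imp_right.2 fun hsum i => ?_
  have hli : LinearIndependent (ZMod q) x :=
    (linearIndepOn_id_range_iff hx).1 (hE.mono (range_subset_iff.2 hxE))
  have hsum' : ∑ i, (n i : ZMod q) • x i = 0 := by
    simpa only [Int.cast_smul_eq_zsmul] using not_not.1 hsum
  rw [← Int.cast_smul_eq_zsmul (ZMod q), linearIndependent_iff'.1 hli Finset.univ _ hsum' i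
    (Finset.mem_univ i), zero_smul]

open Pointwise in
theorem Set.Countable.countable_of_isOpen {G : Type u} [AddGroup G] [TopologicalSpace G]
    [IsTopologicalAddGroup G] [SecondCountableTopology G] {V : Set G} (hc : V.Countable)
    (hV : IsOpen V) (hne : V.Nonempty) : Countable G := by
  obtain ⟨v, hv⟩ := hne
  obtain ⟨s, hs, hcover⟩ := TopologicalSpace.countable_cover_nhds
    fun x : G => (hV.vadd (x - v)).mem_nhds ⟨v, hv, by simp⟩
  rw [← countable_univ_iff, ← hcover]
  exact hs.biUnion fun g _ => hc.image _

theorem exists_mem_notMem_span_of_not_countable {R M : Type*} [Ring R] [Finite R]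
    [AddCommGroup M] [Module R M] {F V : Set M} (hF : F.Finite) (hV : ¬ V.Countable) :
    ∃ x ∈ V, x ∉ Submodule.span R F := by
  by_contra! hVF
  have := Module.Finite.span_of_finite R hF
  have : Finite (Submodule.span R F) := Module.finite_of_finite R
  exact hV ((Submodule.span R F : Set M).toFinite.countable.mono hVF)

theorem exists_monotone_forall_and_subset_closure_iUnion {X : Type*} [TopologicalSpace X]
    [SecondCountableTopology X] (P : Set X → Prop) (U : Set X) (h0 : P ∅)
    (hext : ∀ F, P F → ∀ V, IsOpen V → (V ∩ U).Nonempty →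
      ∃ F', P F' ∧ F ⊆ F' ∧ (F' ∩ V).Nonempty) :
    ∃ F : ℕ → Set X, Monotone F ∧ (∀ k, P (F k)) ∧ U ⊆ closure (⋃ k, F k) := by
  classical
  choose! ext hextP hext_sub hext_meets using hext
  obtain ⟨B, hBc, -, hB⟩ := TopologicalSpace.exists_countable_basis X
  obtain ⟨b, hb⟩ := (hBc.insert ∅).exists_eq_range (insert_nonempty _ _)
  have hbo : ∀ n, IsOpen (b n) := by
    intro n
    rcases (hb ▸ mem_range_self n : b n ∈ insert ∅ B) with h | h
    · exact h ▸ isOpen_empty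
    · exact hB.isOpen h
  let F : ℕ → Set X := fun n =>
    Nat.rec ∅ (fun n Fn => if (b n ∩ U).Nonempty then ext Fn (b n) else Fn) n
  have hF_succ (n : ℕ) : F (n + 1) = if (b n ∩ U).Nonempty then ext (F n) (b n) else F n := rfl
  have hP (n : ℕ) : P (F n) := by
    induction n with
    | zero => exact h0
    | succ n ih =>
      rw [hF_succ]
      split_ifs with h
      exacts [hextP _ ih _ (hbo n) h, ih]
  refine ⟨F, monotone_nat_of_le_succ fun n => ?_, hP, fun x hx => mem_closure_iff.2 ?_⟩
  · rw [hF_succ]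
    split_ifs with h
    exacts [hext_sub _ (hP n) _ (hbo n) h, subset_rfl]
  · intro W hW hxW
    obtain ⟨c, hcB, hxc, hcW⟩ := hB.exists_subset_of_mem_open hxW hW
    obtain ⟨n, rfl⟩ : c ∈ range b := hb ▸ mem_insert_of_mem _ hcB
    have hn : (b n ∩ U).Nonempty := ⟨x, hxc, hx⟩
    obtain ⟨y, hyF, hyb⟩ := hext_meets _ (hP n) _ (hbo n) hn
    refine ⟨y, hcW hyb, mem_iUnion.2 ⟨n + 1, ?_⟩⟩
    rwa [hF_succ, if_pos hn]

theorem stmt_12_general (q : ℕ) (hq : q.Prime)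
    (N : Type u) [AddCommGroup N] [TopologicalSpace N] [IsTopologicalAddGroup N]
    [SecondCountableTopology N]
    (hunc : ¬ Countable N)
    (horder : ∀ x : N, x ≠ 0 → addOrderOf x = q)
    (U : Set N) (hU : IsOpen U) :
    ∃ F : ℕ → Set N, Monotone F ∧
      (∀ k, F k ⊆ U ∧ (F k).Finite ∧ IsIndependentSet (F k)) ∧
      U ⊆ closure (⋃ k, F k) := by
  have : Fact q.Prime := ⟨hq⟩
  let : Module (ZMod q) N := AddCommGroup.zmodModule fun x => by
    rcases eq_or_ne x 0 with rfl | hx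
    · exact nsmul_zero q
    · rw [← horder x hx]
      exact addOrderOf_nsmul_eq_zero x
  obtain ⟨F, hmono, hF, hdense⟩ := exists_monotone_forall_and_subset_closure_iUnion
    (fun F => F.Finite ∧ F ⊆ U ∧ LinearIndepOn (ZMod q) id F) U
    ⟨finite_empty, empty_subset U, linearIndepOn_empty _ _⟩ <| by
      rintro F ⟨hFfin, hFU, hFli⟩ V hV hVU
      obtain ⟨x, ⟨hxV, hxU⟩, hx⟩ := exists_mem_notMem_span_of_not_countable (R := ZMod q) hFfin
        fun hc => hunc (hc.countable_of_isOpen (hV.inter hU) hVU)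
      exact ⟨insert x F, ⟨hFfin.insert x, insert_subset hxU hFU, hFli.id_insert hx⟩,
        subset_insert x F, x, mem_insert x F, hxV⟩
  exact ⟨F, hmono, fun k => ⟨(hF k).2.1, (hF k).1, isIndependentSet_of_linearIndepOn (hF k).2.2⟩,
    hdense⟩

/-- **Lemma 3.3** (torsion case). Let `q` be a prime and let `N` be a second countable,
uncountable, locally compact abelian group in which every non-trivial element has order `q`.
Then every non-empty open subset `U` of `N` contains an increasing sequence `(F_k)` of finite
independent subsets whose union is dense in `U`. -/
theorem stmt_12 (q : ℕ) (hq : q.Prime)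
    (N : Type u) [AddCommGroup N] [TopologicalSpace N] [IsTopologicalAddGroup N]
    [LocallyCompactSpace N] [SecondCountableTopology N]
    (hunc : ¬ Countable N)
    (horder : ∀ x : N, x ≠ 0 → addOrderOf x = q)
    (U : Set N) (hU : IsOpen U) (hne : U.Nonempty) :
    ∃ F : ℕ → Set N, Monotone F ∧
      (∀ k, F k ⊆ U ∧ (F k).Finite ∧ IsIndependentSet (F k)) ∧
      U ⊆ closure (⋃ k, F k) :=
  stmt_12_general q hq N hunc horder U hU
end
end
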